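/- arXiv:2504.07832 — 2 statements merged into one kernel-verified Lean document; each statement's English description precedes it below -/
import Mathlib

section
/- Let G be a finite transitive permutation group with point stabiliser H admitting a base-controlling homomorphism φ, and let χ = Ind_H^G(1_H). Then b(G) = min{ l ∈ ℕ : ⟨φ, χ^l⟩ ≠ 0 }. -/
open scoped BigOperators Classical

/-- The standard inner product of class functions on a finite group. -/
noncomputable def cInner (G : Type) [Group G] (φ ψ : G → ℂ) : ℂ :=
  (Nat.card G : ℂ)⁻¹ * ∑ᶠ g : G, φ g * starRingEnd ℂ (ψ g)

/-- The induction of a class function from a subgroup, given by the usual formula. -/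
noncomputable def indChar {G : Type} [Group G] (H : Subgroup G) (α : H → ℂ) : G → ℂ :=
  fun g => (Nat.card H : ℂ)⁻¹ *
    ∑ᶠ x : G, if h : x * g * x⁻¹ ∈ H then α ⟨x * g * x⁻¹, h⟩ else 0

/-- Restriction of a class function to a subgroup. -/
def resChar {G : Type} [Group G] (H : Subgroup G) (α : G → ℂ) : H → ℂ :=
  fun h => α (h : G)

/-- `α` is a (complex) character of `G`. -/
def IsChar (G : Type) [Group G] (α : G → ℂ) : Prop :=
  ∃ V : FDRep ℂ G, α = V.character

/-- `α` is an irreducible (complex) character of `G`. -/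
def IsIrrChar (G : Type) [Group G] (α : G → ℂ) : Prop :=
  ∃ V : FDRep ℂ G, CategoryTheory.Simple V ∧ α = V.character

/-- Two class functions on `H` have induced characters sharing a common irreducible
constituent. -/
def SharesIrrConstituent {G : Type} [Group G] (H : Subgroup G) (α β : H → ℂ) : Prop :=
  ∃ γ : G → ℂ, IsIrrChar G γ ∧ cInner G (indChar H α) γ ≠ 0 ∧ cInner G (indChar H β) γ ≠ 0

/-- The Külshammer graph of `H ≤ G`: vertices are irreducible characters of `H`
(other class functions are isolated vertices), two of them being adjacent iff their
induced characters share a common irreducible constituent. -/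
def kulshammerGraph (G : Type) [Group G] (H : Subgroup G) : SimpleGraph (H → ℂ) where
  Adj α β := α ≠ β ∧ IsIrrChar H α ∧ IsIrrChar H β ∧ SharesIrrConstituent H α β
  symm := by
    constructor
    rintro a b ⟨hne, ha, hb, γ, hγ, h1, h2⟩
    exact ⟨hne.symm, hb, ha, γ, hγ, h2, h1⟩
  loopless := ⟨fun a h => h.1 rfl⟩

/-- The diameter of the Külshammer graph: the diameter of the subgraph induced on the
set of irreducible characters of `H`. -/
noncomputable def kulshammerDiam (G : Type) [Group G] (H : Subgroup G) : ℕ :=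
  ((kulshammerGraph G H).induce {α | IsIrrChar H α}).diam

/-- The base size of a permutation group: the least length of a tuple of points whose
pointwise stabiliser is trivial. -/
noncomputable def baseSize (G Ω : Type) [Group G] [MulAction G Ω] : ℕ :=
  sInf {m | ∃ A : Fin m → Ω, (⨅ i, MulAction.stabilizer G (A i)) = ⊥}

/-- A homomorphism `φ : G → {1, -1}` is base-controlling if a tuple of points is a base
exactly when `φ` is trivial on its pointwise stabiliser. -/
def IsBaseControlling (G Ω : Type) [Group G] [MulAction G Ω] (φ : G →* ℂ) : Prop :=
  (∀ g : G, φ g = 1 ∨ φ g = -1) ∧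
  ∀ (m : ℕ) (A : Fin m → Ω),
    (⨅ i, MulAction.stabilizer G (A i)) = ⊥ ↔
      ∀ g ∈ ⨅ i, MulAction.stabilizer G (A i), φ g = 1


theorem stmt_6 (G Ω : Type) [Group G] [Finite G] [MulAction G Ω]
    [MulAction.IsPretransitive G Ω] (ω : Ω) (H : Subgroup G)
    (hH : H = MulAction.stabilizer G ω)
    (φ : G →* ℂ) (hφ : IsBaseControlling G Ω φ) :
    baseSize G Ω = sInf {l : ℕ | cInner G ⇑φ ((indChar H (1 : ↥H → ℂ)) ^ l) ≠ 0} := by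
  have : Fintype G := Fintype.ofFinite G
  -- membership translation
  have hmem : ∀ (x g : G), x * g * x⁻¹ ∈ H ↔ g ∈ MulAction.stabilizer G (x⁻¹ • ω) := by
    subst hH
    intro x g
    simp only [MulAction.mem_stabilizer_iff, mul_smul]
    constructor
    · intro h
      have := congrArg (fun y => x⁻¹ • y) h
      simpa using this
    · intro h
      rw [h, smul_inv_smul]
  -- value of the permutation character
  have hchi : ∀ g : G, indChar H (1 : ↥H → ℂ) g
      = (Nat.card ↥H : ℂ)⁻¹ *
        ∑ x : G, (if g ∈ MulAction.stabilizer G (x⁻¹ • ω) then (1 : ℂ) else 0) := by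
    intro g
    rw [indChar, finsum_eq_sum_of_fintype]
    congr 1
    refine Finset.sum_congr rfl fun x _ => ?_
    by_cases h : x * g * x⁻¹ ∈ H
    · rw [dif_pos h, if_pos ((hmem x g).mp h)]
      simp
    · rw [dif_neg h, if_neg fun hc => h ((hmem x g).mpr hc)]
  have hconj : ∀ g : G, (starRingEnd ℂ) (indChar H (1 : ↥H → ℂ) g)
      = indChar H (1 : ↥H → ℂ) g := by
    intro g
    rw [hchi g]
    simp [apply_ite (starRingEnd ℂ)]
  -- character sum over a stabilizer intersection
  have hsum : ∀ (m : ℕ) (A : Fin m → Ω),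
      (∑ g : G, if g ∈ ⨅ i, MulAction.stabilizer G (A i) then φ g else 0)
        = if (⨅ i, MulAction.stabilizer G (A i)) = ⊥ then 1 else 0 := by
    intro m A
    set K := ⨅ i, MulAction.stabilizer G (A i) with hK
    split_ifs with h
    · rw [h]
      simp [Subgroup.mem_bot, Finset.sum_ite_eq']
    · obtain ⟨g₀, hg₀K, hg₀⟩ : ∃ g₀ ∈ K, φ g₀ ≠ 1 := by
        by_contra hc
        push_neg at hc
        exact h ((hφ.2 m A).mpr hc)
      have hneg : φ g₀ = -1 := (hφ.1 g₀).resolve_left hg₀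
      have hite : ∀ (p : Prop) [Decidable p] (a : ℂ),
          (if p then -a else 0) = -(if p then a else 0) := by
        intro p _ a; split_ifs <;> simp
      have key : (∑ g : G, if g ∈ K then φ g else 0)
          = -∑ g : G, if g ∈ K then φ g else 0 := by
        calc (∑ g : G, if g ∈ K then φ g else 0)
            = ∑ g : G, if (Equiv.mulLeft g₀) g ∈ K then φ ((Equiv.mulLeft g₀) g) else 0 :=
              (Equiv.sum_comp (Equiv.mulLeft g₀) fun x => if x ∈ K then φ x else 0).symm
          _ = ∑ g : G, -(if g ∈ K then φ g else 0) := by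
              refine Finset.sum_congr rfl fun g _ => ?_
              simp only [Equiv.coe_mulLeft]
              simp only [mul_mem_cancel_left hg₀K]
              rw [← hite]
              split_ifs with hg
              · rw [map_mul, hneg, neg_one_mul]
              · rfl
          _ = -∑ g : G, if g ∈ K then φ g else 0 := by rw [Finset.sum_neg_distrib]
      have h2 : (2 : ℂ) * (∑ g : G, if g ∈ K then φ g else 0) = 0 := by
        linear_combination key
      exact (mul_eq_zero.mp h2).resolve_left two_ne_zero
  -- the main computation
  have hmain : ∀ l : ℕ, cInner G ⇑φ ((indChar H (1 : ↥H → ℂ)) ^ l)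
      = (Nat.card G : ℂ)⁻¹ * ((Nat.card ↥H : ℂ)⁻¹ ^ l *
        ∑ x : Fin l → G,
          if (⨅ i, MulAction.stabilizer G ((x i)⁻¹ • ω)) = ⊥ then (1 : ℂ) else 0) := by
    intro l
    rw [cInner, finsum_eq_sum_of_fintype]
    congr 1
    calc ∑ g : G, φ g * starRingEnd ℂ ((indChar H (1 : ↥H → ℂ) ^ l) g)
        = ∑ g : G, (Nat.card ↥H : ℂ)⁻¹ ^ l * ∑ x : Fin l → G,
            (φ g * ∏ i, (if g ∈ MulAction.stabilizer G ((x i)⁻¹ • ω) then (1 : ℂ) else 0)) := by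
          refine Finset.sum_congr rfl fun g _ => ?_
          rw [Pi.pow_apply, map_pow, hconj g, hchi g, mul_pow, Fintype.sum_pow]
          simp only [Finset.mul_sum]
          refine Finset.sum_congr rfl fun x _ => ?_
          ring
      _ = (Nat.card ↥H : ℂ)⁻¹ ^ l * ∑ x : Fin l → G, ∑ g : G,
            (φ g * ∏ i, (if g ∈ MulAction.stabilizer G ((x i)⁻¹ • ω) then (1 : ℂ) else 0)) := by
          rw [← Finset.mul_sum, Finset.sum_comm]
      _ = (Nat.card ↥H : ℂ)⁻¹ ^ l * ∑ x : Fin l → G,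
            (if (⨅ i, MulAction.stabilizer G ((x i)⁻¹ • ω)) = ⊥ then (1 : ℂ) else 0) := by
          congr 1
          refine Finset.sum_congr rfl fun x _ => ?_
          rw [← hsum l (fun i => (x i)⁻¹ • ω)]
          refine Finset.sum_congr rfl fun g _ => ?_
          rw [Fintype.prod_boole]
          simp only [Subgroup.mem_iInf]
          split_ifs <;> simp
  -- nonvanishing criterion
  have hne : ∀ l : ℕ, cInner G ⇑φ ((indChar H (1 : ↥H → ℂ)) ^ l) ≠ 0 ↔
      ∃ A : Fin l → Ω, (⨅ i, MulAction.stabilizer G (A i)) = ⊥ := by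
    intro l
    rw [hmain l]
    have h1 : (Nat.card G : ℂ)⁻¹ ≠ 0 :=
      inv_ne_zero (Nat.cast_ne_zero.mpr Nat.card_pos.ne')
    have h2 : ((Nat.card ↥H : ℂ)⁻¹ ^ l) ≠ 0 :=
      pow_ne_zero _ (inv_ne_zero (Nat.cast_ne_zero.mpr Nat.card_pos.ne'))
    rw [mul_ne_zero_iff, mul_ne_zero_iff, and_iff_right h1, and_iff_right h2]
    rw [Finset.sum_boole, Nat.cast_ne_zero, ← Nat.pos_iff_ne_zero, Finset.card_pos,
      Finset.filter_nonempty_iff]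
    constructor
    · rintro ⟨x, -, hx⟩
      exact ⟨fun i => (x i)⁻¹ • ω, hx⟩
    · rintro ⟨A, hA⟩
      choose x hx using fun i => MulAction.exists_smul_eq G (A i) ω
      refine ⟨x, Finset.mem_univ _, ?_⟩
      have hxe : ∀ i, (x i)⁻¹ • ω = A i := fun i => by rw [← hx i, inv_smul_smul]
      exact (iInf_congr fun i => by rw [hxe i]).trans hA
  rw [baseSize]
  congr 1
  ext l
  exact (hne l).symm
end

section
/- Let n ≥ 2k with k ≥ 1, let G = S_n act on k-element subsets with permutation character χ, and let sgn be the sign character of S_n. Then b(S_{n,k}) = min{ l ∈ ℕ : ⟨sgn, χ^l⟩ ≠ 0 }. -/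
open scoped BigOperators Classical

instance kSubsetSMul (n k : ℕ) :
    SMul (Equiv.Perm (Fin n)) {s : Finset (Fin n) // s.card = k} where
  smul g s := ⟨s.1.image g, by
    rw [Finset.card_image_of_injective _ g.injective]; exact s.2⟩

theorem kSubset_smul_coe {n k : ℕ} (g : Equiv.Perm (Fin n))
    (s : {s : Finset (Fin n) // s.card = k}) : (g • s).1 = s.1.image g := rfl

/-- The action of `Sₙ` on `k`-element subsets of `{1,…,n}`. -/
instance kSubsetAction (n k : ℕ) :
    MulAction (Equiv.Perm (Fin n)) {s : Finset (Fin n) // s.card = k} where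
  one_smul s := Subtype.ext (by rw [kSubset_smul_coe]; simp)
  mul_smul g h s := Subtype.ext (by
    rw [kSubset_smul_coe, kSubset_smul_coe, kSubset_smul_coe, Finset.image_image]; rfl)

/-- The sign character of `Sₙ`, as a complex-valued homomorphism. -/
noncomputable def sgnC (n : ℕ) : Equiv.Perm (Fin n) →* ℂ :=
  (Int.castRingHom ℂ).toMonoidHom.comp ((Units.coeHom ℤ).comp Equiv.Perm.sign)


/-! ### Auxiliary lemmas -/

lemma sumHomSubgroup {G : Type} [Group G] [Fintype G] (φ : G →* ℂ) (K : Subgroup G) :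
    (∑ g : K, φ (g : G)) = if (∀ g ∈ K, φ g = 1) then (Nat.card K : ℂ) else 0 := by
  split_ifs with h
  · have h' : ∀ g : K, φ (g : G) = 1 := fun g => h (g : G) g.2
    rw [Finset.sum_congr rfl (fun g _ => h' g), Finset.sum_const,
      Nat.card_eq_fintype_card, Finset.card_univ, nsmul_eq_mul, mul_one]
  · push_neg at h
    obtain ⟨g₀, hg₀K, hg₀⟩ := h
    have key : φ g₀ * (∑ g : K, φ (g : G)) = ∑ g : K, φ (g : G) := by
      rw [Finset.mul_sum]
      exact Fintype.sum_equiv (Equiv.mulLeft (⟨g₀, hg₀K⟩ : K)) _ _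
        (fun g => by simp [map_mul])
    have h2 : (φ g₀ - 1) * (∑ g : K, φ (g : G)) = 0 := by
      rw [sub_mul, one_mul, key, sub_self]
    rcases mul_eq_zero.mp h2 with h3 | h3
    · exact absurd (sub_eq_zero.mp h3) hg₀
    · exact h3

lemma trans_lem {n k : ℕ} (s t : {s : Finset (Fin n) // s.card = k}) :
    ∃ σ : Equiv.Perm (Fin n), σ • s = t := by
  have hc : (s.1 : Finset (Fin n)).card = t.1.card := by rw [s.2, t.2]
  have hcc : (s.1ᶜ : Finset (Fin n)).card = t.1ᶜ.card := by
    rw [Finset.card_compl, Finset.card_compl, hc]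
  let e : {x // x ∈ s.1} ≃ {x // x ∈ t.1} := Finset.equivOfCardEq hc
  let f : {x // ¬ x ∈ s.1} ≃ {x // ¬ x ∈ t.1} :=
    ((Equiv.subtypeEquivRight (fun x => (Finset.mem_compl).symm)).trans
      (Finset.equivOfCardEq hcc)).trans (Equiv.subtypeEquivRight (fun x => Finset.mem_compl))
  refine ⟨Equiv.subtypeCongr e f, Subtype.ext ?_⟩
  rw [kSubset_smul_coe]
  have hsub : s.1.image (Equiv.subtypeCongr e f) ⊆ t.1 := by
    intro x hx
    rcases Finset.mem_image.mp hx with ⟨y, hy, rfl⟩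
    have : Equiv.subtypeCongr e f y = (e ⟨y, hy⟩ : Fin n) := by
      simp [Equiv.subtypeCongr, hy]
    rw [this]; exact (e ⟨y, hy⟩).2
  refine Finset.eq_of_subset_of_card_le hsub ?_
  rw [Finset.card_image_of_injective _ (Equiv.injective _), s.2, t.2]

lemma indChar_eq_fix {n k : ℕ} (ω : {s : Finset (Fin n) // s.card = k})
    (H : Subgroup (Equiv.Perm (Fin n)))
    (hH : H = MulAction.stabilizer (Equiv.Perm (Fin n)) ω)
    (g : Equiv.Perm (Fin n)) :
    indChar H (1 : ↥H → ℂ) g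
      = ((Finset.univ.filter fun s : {s : Finset (Fin n) // s.card = k} => g • s = s).card : ℂ) := by
  classical
  have hcard : (0 : ℕ) < Nat.card H := Nat.card_pos
  rw [indChar, finsum_eq_sum_of_fintype]
  have h1 : ∀ x : Equiv.Perm (Fin n),
      (if h : x * g * x⁻¹ ∈ H then (1 : H → ℂ) ⟨x * g * x⁻¹, h⟩ else 0)
      = if g • (x⁻¹ • ω) = x⁻¹ • ω then (1:ℂ) else 0 := by
    intro x
    have hmem : x * g * x⁻¹ ∈ H ↔ g • (x⁻¹ • ω) = x⁻¹ • ω := by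
      rw [hH, MulAction.mem_stabilizer_iff]
      constructor
      · intro h
        have := congrArg (fun z => x⁻¹ • z) h
        simpa [mul_smul] using this
      · intro h
        have := congrArg (fun z => x • z) h
        simpa [mul_smul] using this
    split_ifs with h h' h'
    · rfl
    · exact absurd (hmem.mp h) h'
    · exact absurd (hmem.mpr h') h
    · rfl
  rw [Finset.sum_congr rfl (fun x _ => h1 x), Finset.sum_boole]
  have key : (Finset.univ.filter fun x : Equiv.Perm (Fin n) => g • (x⁻¹ • ω) = x⁻¹ • ω).card
      = (Finset.univ.filter fun s : {s : Finset (Fin n) // s.card = k} => g • s = s).card * Nat.card H := by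
    rw [Finset.card_eq_sum_card_fiberwise
      (f := fun x : Equiv.Perm (Fin n) => x⁻¹ • ω)
      (t := Finset.univ.filter fun s : {s : Finset (Fin n) // s.card = k} => g • s = s)
      (fun x hx => by
        simp only [Finset.mem_coe, Finset.mem_filter, Finset.mem_univ, true_and] at hx ⊢; exact hx)]
    rw [Finset.sum_congr rfl (fun b hb => ?_), Finset.sum_const, smul_eq_mul]
    simp only [Finset.mem_filter, Finset.mem_univ, true_and] at hb
    rw [Finset.filter_filter]
    have : (Finset.univ.filter fun x : Equiv.Perm (Fin n) => g • (x⁻¹ • ω) = x⁻¹ • ω ∧ x⁻¹ • ω = b)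
        = Finset.univ.filter (fun x : Equiv.Perm (Fin n) => x⁻¹ • ω = b) := by
      apply Finset.filter_congr
      intro x _
      constructor
      · exact fun h => h.2
      · intro h; exact ⟨by rw [h]; exact hb, h⟩
    rw [this]
    obtain ⟨σ, hσ⟩ := trans_lem b ω
    have hσ' : σ⁻¹ • ω = b := by rw [← hσ, inv_smul_smul]
    have e : {x : Equiv.Perm (Fin n) // x⁻¹ • ω = b} ≃ ↥H := {
      toFun := fun x => ⟨σ * x.1⁻¹, by
        rw [hH]
        exact MulAction.mem_stabilizer_iff.mpr (by rw [mul_smul, x.2, hσ])⟩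
      invFun := fun h => ⟨(h : Equiv.Perm (Fin n))⁻¹ * σ, by
        have h2 : (h : Equiv.Perm (Fin n)) • ω = ω :=
          MulAction.mem_stabilizer_iff.mp (hH ▸ h.2)
        rw [mul_inv_rev, inv_inv, mul_smul, h2, hσ']⟩
      left_inv := fun x => Subtype.ext (by simp [mul_inv_rev, mul_assoc])
      right_inv := fun h => Subtype.ext (by simp [mul_inv_rev, mul_assoc]) }
    rw [← Fintype.card_subtype, ← Nat.card_eq_fintype_card, Nat.card_congr e]
  rw [key]
  push_cast
  rw [mul_comm ((Finset.univ.filter fun s : {s : Finset (Fin n) // s.card = k} => g • s = s).card : ℂ)]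
  rw [← mul_assoc, inv_mul_cancel₀ (by exact_mod_cast hcard.ne'), one_mul]

lemma swap_image {n : ℕ} (S : Finset (Fin n)) (a b : Fin n) (h : a ∈ S ↔ b ∈ S) :
    S.image (Equiv.swap a b) = S := by
  have hmem : ∀ (a b : Fin n), (a ∈ S ↔ b ∈ S) → ∀ y ∈ S, Equiv.swap a b y ∈ S := by
    intro a b h y hy
    rcases eq_or_ne y a with rfl | hya
    · rw [Equiv.swap_apply_left]; exact h.mp hy
    rcases eq_or_ne y b with rfl | hyb
    · rw [Equiv.swap_apply_right]; exact h.mpr hy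
    · rw [Equiv.swap_apply_of_ne_of_ne hya hyb]; exact hy
  ext x
  rw [Finset.mem_image]
  constructor
  · rintro ⟨y, hy, rfl⟩; exact hmem a b h y hy
  · intro hx
    refine ⟨Equiv.swap a b x, ?_, Equiv.swap_apply_self a b x⟩
    rw [Equiv.swap_comm]
    exact hmem b a (Iff.symm h) x hx

lemma sgn_ctrl {n k l : ℕ} (A : Fin l → {s : Finset (Fin n) // s.card = k}) :
    (⨅ i, MulAction.stabilizer (Equiv.Perm (Fin n)) (A i)) = ⊥ ↔
      ∀ g ∈ ⨅ i, MulAction.stabilizer (Equiv.Perm (Fin n)) (A i), sgnC n g = 1 := by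
  constructor
  · intro hbot g hg
    rw [hbot, Subgroup.mem_bot] at hg
    rw [hg, map_one]
  · intro htriv
    by_contra hne
    rcases Subgroup.bot_or_exists_ne_one _ |>.resolve_left hne with ⟨g, hgK, hg1⟩
    obtain ⟨a, ha⟩ : ∃ a, g a ≠ a := by
      by_contra hall
      push_neg at hall
      exact hg1 (Equiv.ext hall)
    have hmemiff : ∀ i, a ∈ (A i).1 ↔ g a ∈ (A i).1 := by
      intro i
      have hi : g • A i = A i := (Subgroup.mem_iInf.mp hgK i)
      have himg : (A i).1.image g = (A i).1 := congrArg Subtype.val hi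
      constructor
      · intro hx; rw [← himg]; exact Finset.mem_image_of_mem _ hx
      · intro hx
        rw [← himg] at hx
        rcases Finset.mem_image.mp hx with ⟨y, hy, hgy⟩
        rwa [← g.injective hgy]
    have hswap : Equiv.swap a (g a) ∈ ⨅ i, MulAction.stabilizer (Equiv.Perm (Fin n)) (A i) := by
      rw [Subgroup.mem_iInf]
      intro i
      exact Subtype.ext (swap_image (A i).1 a (g a) (hmemiff i))
    have := htriv _ hswap
    rw [show sgnC n (Equiv.swap a (g a)) = ((Equiv.Perm.sign (Equiv.swap a (g a)) : ℤ) : ℂ) from rfl,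
      Equiv.Perm.sign_swap (Ne.symm ha)] at this
    norm_num at this

lemma cInner_ne_zero_iff {n k : ℕ} (ω : {s : Finset (Fin n) // s.card = k})
    (H : Subgroup (Equiv.Perm (Fin n)))
    (hH : H = MulAction.stabilizer (Equiv.Perm (Fin n)) ω) (l : ℕ) :
    cInner (Equiv.Perm (Fin n)) ⇑(sgnC n) ((indChar H (1 : ↥H → ℂ)) ^ l) ≠ 0 ↔
      ∃ A : Fin l → {s : Finset (Fin n) // s.card = k},
        (⨅ i, MulAction.stabilizer (Equiv.Perm (Fin n)) (A i)) = ⊥ := by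
  classical
  have hg : ∀ g : Equiv.Perm (Fin n),
      sgnC n g * starRingEnd ℂ (((indChar H (1 : ↥H → ℂ)) ^ l) g)
      = ∑ A : Fin l → {s : Finset (Fin n) // s.card = k},
          if (∀ i, g • A i = A i) then sgnC n g else 0 := by
    intro g
    rw [Pi.pow_apply, indChar_eq_fix ω H hH g, map_pow, map_natCast]
    have hb : ((Finset.univ.filter fun s : {s : Finset (Fin n) // s.card = k} => g • s = s).card : ℂ)
        = ∑ s : {s : Finset (Fin n) // s.card = k}, if g • s = s then (1:ℂ) else 0 :=
      (Finset.sum_boole _ _).symm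
    rw [hb]
    have hpow : ∀ x : ℂ, x ^ l = ∏ _i : Fin l, x := fun x => by
      rw [Finset.prod_const, Finset.card_univ, Fintype.card_fin]
    rw [hpow, Finset.prod_univ_sum, Fintype.piFinset_univ, Finset.mul_sum]
    refine Finset.sum_congr rfl (fun A _ => ?_)
    rw [Finset.prod_boole]
    simp only [Finset.mem_univ, forall_const, mul_ite, mul_one, mul_zero]
  have hA : ∀ A : Fin l → {s : Finset (Fin n) // s.card = k},
      (∑ g : Equiv.Perm (Fin n), if (∀ i, g • A i = A i) then sgnC n g else 0)
      = (((if (∀ g ∈ ⨅ i, MulAction.stabilizer (Equiv.Perm (Fin n)) (A i), sgnC n g = 1)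
          then Nat.card (⨅ i, MulAction.stabilizer (Equiv.Perm (Fin n)) (A i) : Subgroup _)
          else 0) : ℕ) : ℂ) := by
    intro A
    have hmem : ∀ g : Equiv.Perm (Fin n), (∀ i, g • A i = A i)
        ↔ g ∈ ⨅ i, MulAction.stabilizer (Equiv.Perm (Fin n)) (A i) := by
      intro g
      rw [Subgroup.mem_iInf]
      exact forall_congr' (fun i => Iff.rfl)
    have h1 : (∑ g : Equiv.Perm (Fin n), if (∀ i, g • A i = A i) then sgnC n g else 0)
        = ∑ g : (⨅ i, MulAction.stabilizer (Equiv.Perm (Fin n)) (A i) : Subgroup _), sgnC n g := by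
      rw [Finset.sum_congr rfl
        (fun g _ => if_congr (hmem g) rfl rfl), ← Finset.sum_filter]
      exact Finset.sum_subtype _ (by simp) _
    rw [h1, sumHomSubgroup (sgnC n)]
    split_ifs <;> simp
  rw [cInner, finsum_eq_sum_of_fintype,
    Finset.sum_congr rfl (fun g _ => hg g), Finset.sum_comm,
    Finset.sum_congr rfl (fun A _ => hA A), ← Nat.cast_sum]
  rw [mul_ne_zero_iff]
  have hGpos : (0:ℕ) < Nat.card (Equiv.Perm (Fin n)) := Nat.card_pos
  constructor
  · rintro ⟨-, hsum⟩
    rw [Ne, Nat.cast_eq_zero, Finset.sum_eq_zero_iff] at hsum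
    push_neg at hsum
    obtain ⟨A, -, hA0⟩ := hsum
    refine ⟨A, (sgn_ctrl A).mpr ?_⟩
    by_contra hcon
    rw [if_neg hcon] at hA0
    exact hA0 rfl
  · rintro ⟨A, hbase⟩
    constructor
    · simpa using hGpos.ne'
    · rw [Ne, Nat.cast_eq_zero, Finset.sum_eq_zero_iff]
      push_neg
      refine ⟨A, Finset.mem_univ A, ?_⟩
      rw [if_pos ((sgn_ctrl A).mp hbase)]
      exact Nat.card_pos.ne'

theorem stmt_9 (n k : ℕ) (hk : 1 ≤ k) (hn : 2 * k ≤ n)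
    (ω : {s : Finset (Fin n) // s.card = k})
    (H : Subgroup (Equiv.Perm (Fin n)))
    (hH : H = MulAction.stabilizer (Equiv.Perm (Fin n)) ω) :
    baseSize (Equiv.Perm (Fin n)) {s : Finset (Fin n) // s.card = k} =
      sInf {l : ℕ |
        cInner (Equiv.Perm (Fin n)) ⇑(sgnC n) ((indChar H (1 : ↥H → ℂ)) ^ l) ≠ 0} := by
  rw [baseSize]
  congr 1
  ext l
  rw [Set.mem_setOf_eq, Set.mem_setOf_eq, cInner_ne_zero_iff ω H hH l]
end
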